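/- Let α > 0 and β ∈ (0,2], and let v(x) := exp(−x^α), where x^α is the principal branch. Then v ∈ X_β if and only if 1 < α ≤ β. In particular, for 1 < α ≤ β ≤ 2 one has v ∈ X_β, while v ∉ X_β whenever β < α or α ≤ 1. -/

import Mathlib

/-! For `x ≠ 0`, `|exp (-x^α)| = exp (-|x|^α cos (α arg x))`. Decay like `|x|^(-δ|x|)` along
the ray `arg x = θ` forces `cos (αθ) > 0` and `α > 1`; asking this for all `θ < ζ(β)` means
`α ζ(β) ≤ π/2`, i.e. `α ≤ β`. Conversely, if `α > 1` and `α ζ(β) ≤ π/2`, then `cos (α arg x)`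
is bounded below by some `c > 0` on each closed subsector, and `exp (-c t^α) ≤ t^(-δ t)` since
`t log t = o(t^α)`. -/

/-- `ζ = (π/2) min(1, 1/α)`. -/
noncomputable def zeta (α : ℝ) : ℝ := Real.pi / 2 * min 1 (1 / α)

/-- The class `X_α` of test functions: `u` is analytic in the sector `|arg x| < ζ`,
real-valued on `(0, ∞)`, and for every `ε ∈ (0, ζ)` there is `δ > 0` such that
`|u(x)| = O(|x|^{-δ|x|})` as `|x| → ∞` and `|u(x)| = O(1)` as `|x| → 0`, uniformly
in the sector `|arg x| ≤ ζ - ε`. -/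
def MemX (α : ℝ) (u : ℂ → ℂ) : Prop :=
  (∀ x : ℂ, x ≠ 0 → |Complex.arg x| < zeta α → AnalyticAt ℂ u x) ∧
  (∀ t : ℝ, 0 < t → (u t).im = 0) ∧
  (∀ ε : ℝ, 0 < ε → ε < zeta α → ∃ δ > 0, ∃ C > 0, ∃ r > 0, ∃ R > 0,
    (∀ x : ℂ, x ≠ 0 → |Complex.arg x| ≤ zeta α - ε → ‖x‖ ≤ r → ‖u x‖ ≤ C) ∧
    (∀ x : ℂ, x ≠ 0 → |Complex.arg x| ≤ zeta α - ε → R ≤ ‖x‖ →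
      ‖u x‖ ≤ C * ‖x‖ ^ (-δ * ‖x‖)))

open Real Filter

lemma zeta_pos {β : ℝ} (hβ : 0 < β) : 0 < zeta β := by
  unfold zeta
  have := lt_min one_pos (one_div_pos.2 hβ)
  positivity

lemma zeta_le_pi_div_two (β : ℝ) : zeta β ≤ π / 2 :=
  mul_le_of_le_one_right (by positivity) (min_le_left _ _)

lemma mul_zeta_le_pi_div_two_iff {α β : ℝ} (hα : 0 ≤ α) (hβ : 0 < β) :
    α * zeta β ≤ π / 2 ↔ α ≤ 1 ∨ α ≤ β := by
  have hζ : α * zeta β = π / 2 * min α (α / β) := by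
    rw [zeta, mul_left_comm, mul_min_of_nonneg _ _ hα, mul_one, mul_one_div]
  rw [hζ, mul_le_iff_le_one_right (by positivity), min_le_iff, div_le_one hβ]

lemma norm_cexp_neg_cpow (α : ℝ) {x : ℂ} (hx : x ≠ 0) :
    ‖Complex.exp (-(x ^ (α : ℂ)))‖ = exp (-(‖x‖ ^ α * cos (α * x.arg))) := by
  have h0 : 0 < ‖x‖ := norm_pos_iff.2 hx
  rw [Complex.norm_exp, Complex.neg_re, Complex.cpow_def_of_ne_zero hx, Complex.exp_re]
  congr 1
  simp [Complex.log_re, Complex.log_im, Real.rpow_def_of_pos h0, mul_comm]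

lemma eventually_mul_rpow_neg_mul_self_lt_exp (a C : ℝ) {δ : ℝ} (hδ : 0 < δ) :
    ∀ᶠ t in atTop, C * t ^ (-δ * t) < exp (-(a * t)) := by
  have hlim : Tendsto (fun t => t * (δ * log t - a)) atTop atTop :=
    tendsto_id.atTop_mul_atTop₀ <|
      tendsto_atTop_add_const_right _ _ (tendsto_log_atTop.const_mul_atTop hδ)
  filter_upwards [(tendsto_exp_atTop.comp hlim).eventually_gt_atTop C, eventually_gt_atTop 0]
    with t hC ht
  have hsplit : exp (-(a * t)) = exp (t * (δ * log t - a)) * t ^ (-δ * t) := by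
    rw [rpow_def_of_pos ht, ← exp_add]
    ring_nf
  rw [hsplit]
  exact mul_lt_mul_of_pos_right hC (rpow_pos_of_pos ht _)

/-- Otherwise `t^α c ≤ |c| t` for `t ≥ 1`, and `exp (-|c| t)` decays too slowly to be
`O(t^(-δ t))`. -/
lemma pos_and_one_lt_of_exp_neg_rpow_le {α c δ C R : ℝ} (hδ : 0 < δ)
    (h : ∀ t ≥ R, exp (-(t ^ α * c)) ≤ C * t ^ (-δ * t)) : 0 < c ∧ 1 < α := by
  by_contra hne
  have hlin : ∀ t ≥ (1 : ℝ), t ^ α * c ≤ |c| * t := by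
    intro t ht
    rcases le_or_gt c 0 with hc | hc
    · nlinarith [rpow_nonneg (zero_le_one.trans ht) α, abs_nonneg c]
    · have hα : α ≤ 1 := not_lt.1 fun hα => hne ⟨hc, hα⟩
      have : t ^ α ≤ t := by simpa using rpow_le_rpow_of_exponent_le ht hα
      rw [abs_of_pos hc, mul_comm]
      exact mul_le_mul_of_nonneg_left this hc.le
  obtain ⟨t, hlt, htR, ht1⟩ := ((eventually_mul_rpow_neg_mul_self_lt_exp |c| C hδ).and
    ((eventually_ge_atTop R).and (eventually_ge_atTop 1))).exists
  have := (exp_le_exp.2 (neg_le_neg (hlin t ht1))).trans (h t htR)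
  linarith

lemma exp_neg_rpow_mul_le_rpow {α c t : ℝ} (hα : 1 < α) (hc : 0 < c) (ht : 1 ≤ t) :
    exp (-(t ^ α * c)) ≤ t ^ (-((α - 1) / 2 * c) * t) := by
  set s := (α - 1) / 2 with hs_def
  have hs : 0 < s := by positivity
  have ht0 : 0 < t := zero_lt_one.trans_le ht
  have hlog : s * log t ≤ t ^ s := by
    have := log_le_rpow_div ht0.le hs
    rwa [le_div_iff₀ hs, mul_comm] at this
  have hpow : t * t ^ s ≤ t ^ α := by
    rw [← rpow_one_add' ht0.le (by positivity)]
    exact rpow_le_rpow_of_exponent_le ht (by linarith [hs_def])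
  rw [rpow_def_of_pos ht0 (-(s * c) * t), exp_le_exp]
  nlinarith [mul_le_mul_of_nonneg_left hlog (by positivity : 0 ≤ c * t)]

section
variable {α β : ℝ}

/-- Along the ray `arg x = θ` the bound of `X_β` reads `exp (-t^α cos (αθ)) ≤ C t^(-δ t)`. -/
lemma MemX.cos_pos_and_one_lt (hv : MemX β fun x : ℂ => Complex.exp (-(x ^ (α : ℂ))))
    {θ : ℝ} (hθ0 : 0 < θ) (hθ : θ < zeta β) : 0 < cos (α * θ) ∧ 1 < α := by
  obtain ⟨δ, hδ, C, -, -, -, R, -, -, hdecay⟩ := hv.2.2 (zeta β - θ) (by linarith) (by linarith)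
  refine pos_and_one_lt_of_exp_neg_rpow_le (C := C) hδ fun t (ht : max R 1 ≤ t) => ?_
  have ht0 : 0 < t := zero_lt_one.trans_le (le_of_max_le_right ht)
  have hθπ : θ ∈ Set.Ioc (-π) π := ⟨by linarith [pi_pos],
    by linarith [zeta_le_pi_div_two β, pi_pos]⟩
  set x : ℂ := t * (Complex.cos θ + Complex.sin θ * Complex.I)
  have harg : x.arg = θ := Complex.arg_mul_cos_add_sin_mul_I ht0 hθπ
  have hnorm : ‖x‖ = t := by
    rw [norm_mul, Complex.norm_cos_add_sin_mul_I, mul_one, Complex.norm_real, norm_of_nonneg ht0.le]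
  have hx : x ≠ 0 := norm_pos_iff.1 (hnorm ▸ ht0)
  have := hdecay x hx (by rw [harg, abs_of_pos hθ0]; linarith)
    (hnorm ▸ le_of_max_le_left ht)
  rwa [norm_cexp_neg_cpow α hx, hnorm, harg] at this

lemma MemX.mul_zeta_le_pi_div_two (hv : MemX β fun x : ℂ => Complex.exp (-(x ^ (α : ℂ))))
    (hα : 0 < α) : α * zeta β ≤ π / 2 := by
  by_contra! h
  have hθ : π / 2 / α < zeta β := by rwa [div_lt_iff₀' hα]
  have := (hv.cos_pos_and_one_lt (by positivity) hθ).1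
  rw [mul_div_cancel₀ _ hα.ne', cos_pi_div_two] at this
  exact this.false

lemma memX_cexp_neg_cpow (hα : 1 < α) (hαβ : α * zeta β ≤ π / 2) :
    MemX β fun x : ℂ => Complex.exp (-(x ^ (α : ℂ))) := by
  refine ⟨fun x hx harg => ?_, fun t ht => ?_, fun ε hε hεζ => ?_⟩
  · have hre : 0 < x.re :=
      (Complex.abs_arg_lt_pi_div_two_iff.1 (harg.trans_le (zeta_le_pi_div_two β))).resolve_right hx
    exact analyticAt_cexp.comp
      (analyticAt_id.cpow analyticAt_const (Complex.mem_slitPlane_iff.2 (Or.inl hre))).neg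
  · dsimp only
    rw [← Complex.ofReal_cpow ht.le, ← Complex.ofReal_neg, ← Complex.ofReal_exp,
      Complex.ofReal_im]
  set c := cos (α * (zeta β - ε))
  have hc : 0 < c := cos_pos_of_mem_Ioo ⟨by nlinarith [pi_pos], by nlinarith⟩
  have hbound : ∀ x : ℂ, x ≠ 0 → |x.arg| ≤ zeta β - ε →
      ‖Complex.exp (-(x ^ (α : ℂ)))‖ ≤ exp (-(‖x‖ ^ α * c)) := by
    intro x hx harg
    have hcos : c ≤ cos (α * x.arg) := by
      rw [← cos_abs (α * x.arg), abs_mul, abs_of_pos (by linarith : 0 < α)]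
      exact cos_le_cos_of_nonneg_of_le_pi (by positivity) (by nlinarith [pi_pos])
        (by gcongr)
    rw [norm_cexp_neg_cpow α hx, exp_le_exp, neg_le_neg_iff]
    exact mul_le_mul_of_nonneg_left hcos (rpow_nonneg (norm_nonneg x) α)
  refine ⟨(α - 1) / 2 * c, by nlinarith, 1, one_pos, 1, one_pos, 1, one_pos,
    fun x hx harg _ => ?_, fun x hx harg hR => ?_⟩
  · refine (hbound x hx harg).trans (exp_le_one_iff.2 ?_)
    have := rpow_nonneg (norm_nonneg x) α
    nlinarith
  · rw [one_mul]
    exact (hbound x hx harg).trans (exp_neg_rpow_mul_le_rpow hα hc hR)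

end

theorem stmt7_general (α β : ℝ) (hβ1 : 0 < β) :
    MemX β (fun x : ℂ => Complex.exp (-(x ^ (α : ℂ)))) ↔ (1 < α ∧ α ≤ β) := by
  constructor
  · intro hv
    have hα : 1 < α := (hv.cos_pos_and_one_lt (half_pos (zeta_pos hβ1)) (half_lt_self (zeta_pos hβ1))).2
    have hαβ := (mul_zeta_le_pi_div_two_iff (by linarith) hβ1).1
      (hv.mul_zeta_le_pi_div_two (by linarith))
    exact ⟨hα, hαβ.resolve_left (not_le.2 hα)⟩
  · rintro ⟨hα, hαβ⟩
    exact memX_cexp_neg_cpow hα ((mul_zeta_le_pi_div_two_iff (by linarith) hβ1).2 (Or.inr hαβ))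

/-- For `α > 0` and `β ∈ (0, 2]`, the function `v(x) = exp(-x^α)` (principal branch)
belongs to `X_β` if and only if `1 < α ≤ β`. -/
theorem stmt7 (α β : ℝ) (hα : 0 < α) (hβ1 : 0 < β) (hβ2 : β ≤ 2) :
    MemX β (fun x : ℂ => Complex.exp (-(x ^ (α : ℂ)))) ↔ (1 < α ∧ α ≤ β) :=
  stmt7_general α β hβ1
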